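/- Let (E,ℒ) be a labeled graph satisfying the standing assumptions with ℰ the smallest normal accommodating set, and let {s_a, p_A} be a representation of (E,ℒ,ℰ) in a C*-algebra such that p_B ≠ 0 for every nonempty B ∈ ℰ. If (α,A) is a loop with an exit, then p_A is an infinite projection. -/

import Mathlib

/-- The `n`-fold concatenation (power) `w^n` of a finite word `w`. -/
def wpow {Λ : Type*} (w : List Λ) (n : ℕ) : List Λ := (List.replicate n w).flatten

/-- The finite word `x_{[1,n]}` formed by the first `n` letters of an infinite word `x`. -/
def wordPrefix {Λ : Type*} (x : ℕ → Λ) (n : ℕ) : List Λ := (List.range n).map x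

/-- A labeled graph `(E, ℒ)`: a directed graph with vertex set `V` and edge type `Edge`
(with range and source maps), together with a surjective labeling map `lbl` onto the
alphabet `Λ`. -/
structure LabeledGraph (V : Type*) (Λ : Type*) where
  Edge : Type*
  src : Edge → V
  rng : Edge → V
  lbl : Edge → Λ
  lbl_surjective : Function.Surjective lbl

namespace LabeledGraph

variable {V : Type*} {Λ : Type*}

/-- `G.PathLabel u w α` holds iff there is a finite path `λ` of length `≥ 1` in the graph
with source `u`, range `w` and label word `ℒ(λ) = α`. -/
inductive PathLabel (G : LabeledGraph V Λ) : V → V → List Λ → Prop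
  | single (e : G.Edge) : PathLabel G (G.src e) (G.rng e) [G.lbl e]
  | cons (e : G.Edge) {w : V} {α : List Λ} :
      PathLabel G (G.rng e) w α → PathLabel G (G.src e) w (G.lbl e :: α)

variable (G : LabeledGraph V Λ)

/-- `α ∈ ℒ*(E)`: `α` is the label of some path of length `≥ 1`. -/
def IsLabel (α : List Λ) : Prop := ∃ u w, G.PathLabel u w α

/-- The relative range `r(A, α)` of `α` with respect to `A`. -/
def rel (A : Set V) (α : List Λ) : Set V := {w | ∃ u ∈ A, G.PathLabel u w α}

/-- `r(α) = r(E⁰, α)`. -/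
def range' (α : List Λ) : Set V := G.rel Set.univ α

/-- `s(α)`: the set of sources of paths labeled `α`. -/
def srcSet (α : List Λ) : Set V := {u | ∃ w, G.PathLabel u w α}

/-- `ℒ(AEⁿ)`: labels of paths of length `n` with source in `A`. -/
def lblFrom (A : Set V) (n : ℕ) : Set (List Λ) :=
  {α | α.length = n ∧ ∃ u ∈ A, ∃ w, G.PathLabel u w α}

/-- `ℒ(AE^{≥1})`: labels of paths of length `≥ 1` with source in `A`. -/
def lblFromGe (A : Set V) : Set (List Λ) := {α | ∃ u ∈ A, ∃ w, G.PathLabel u w α}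

/-- `ℒ(EⁿA)`: labels of paths of length `n` with range in `A`. -/
def lblTo (A : Set V) (n : ℕ) : Set (List Λ) :=
  {α | α.length = n ∧ ∃ u, ∃ w ∈ A, G.PathLabel u w α}

/-- The generalized vertex `[v]_l`: the set of vertices `w` receiving at least one edge
such that `ℒ(E^k w) = ℒ(E^k v)` for all `1 ≤ k ≤ l`. -/
def gv (v : V) (l : ℕ) : Set V :=
  {w | (∃ e : G.Edge, G.rng e = w) ∧
    ∀ k : ℕ, 1 ≤ k → k ≤ l → G.lblTo {w} k = G.lblTo {v} k}

/-- Membership in `ℰ`, the smallest collection of subsets of `E⁰` containing all ranges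
`r(α)` and closed under relative ranges, finite intersections, finite unions and
relative complements (the smallest normal accommodating set). -/
inductive memE : Set V → Prop
  | empty : memE ∅
  | range (α : List Λ) : α ≠ [] → memE (G.range' α)
  | relRange {A : Set V} (α : List Λ) : α ≠ [] → memE A → memE (G.rel A α)
  | inter {A C : Set V} : memE A → memE C → memE (A ∩ C)
  | union {A C : Set V} : memE A → memE C → memE (A ∪ C)
  | diff {A C : Set V} : memE A → memE C → memE (A \ C)

/-- The standing assumptions on the labeled space `(E, ℒ, ℰ)`: the graph has no sinks and
the labeled space is weakly left-resolving, set-finite and receiver set-finite. -/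
structure Standing : Prop where
  no_sinks : ∀ u : V, ∃ e : G.Edge, G.src e = u
  weakly_left_resolving : ∀ A C : Set V, G.memE A → G.memE C →
    ∀ α : List Λ, α ≠ [] → G.rel (A ∩ C) α = G.rel A α ∩ G.rel C α
  set_finite : ∀ A : Set V, G.memE A → ∀ k : ℕ, 1 ≤ k → (G.lblFrom A k).Finite
  receiver_set_finite : ∀ A : Set V, G.memE A → ∀ k : ℕ, 1 ≤ k → (G.lblTo A k).Finite

/-- `α` is agreeable for `[v]_l` (the condition only depends on `l`):
`α = βα' = α'γ` with `α', β, γ ∈ ℒ*(E)` and `|β| = |γ| ≤ l`. -/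
def Agreeable (l : ℕ) (α : List Λ) : Prop :=
  ∃ α' β γ : List Λ, G.IsLabel α' ∧ G.IsLabel β ∧ G.IsLabel γ ∧
    β.length = γ.length ∧ β.length ≤ l ∧ α = β ++ α' ∧ α = α' ++ γ

/-- `α` (a path with `s(α) ∩ [v]_l ≠ ∅`) is disagreeable for `[v]_l`. -/
def DisagreeableFor (v : V) (l : ℕ) (α : List Λ) : Prop :=
  (G.srcSet α ∩ G.gv v l).Nonempty ∧ ¬ G.Agreeable l α

/-- The generalized vertex `[v]_l` is disagreeable: there is `N ≥ 1` such that for every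
`n > N` there is a path in `ℒ(E^{≥n})` which is disagreeable for `[v]_l`. -/
def DisagreeableGV (v : V) (l : ℕ) : Prop :=
  ∃ N : ℕ, 1 ≤ N ∧ ∀ n : ℕ, N < n →
    ∃ α : List Λ, n ≤ α.length ∧ G.DisagreeableFor v l α

/-- The labeled space `(E, ℒ, ℰ)` is disagreeable. -/
def Disagreeable : Prop :=
  ∀ v : V, ∃ L : ℕ, 1 ≤ L ∧ ∀ l : ℕ, L ≤ l → G.DisagreeableGV v l

/-- `(α, A)` is a loop: `A ∈ ℰ` is nonempty, `α ∈ ℒ*(E)` and `A ⊆ r(A, α)`. -/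
def IsLoop (α : List Λ) (A : Set V) : Prop :=
  α ≠ [] ∧ G.memE A ∧ A.Nonempty ∧ A ⊆ G.rel A α

/-- The loop `(α, A)` has an exit: either (i) there is `β ∈ ℒ(AE^{|α|})` with `β ≠ α` and
`r(A, β) ≠ ∅`, or (ii) `A ⊊ r(A, α)`. -/
def HasExit (α : List Λ) (A : Set V) : Prop :=
  (∃ β : List Λ, β ∈ G.lblFrom A α.length ∧ β ≠ α ∧ (G.rel A β).Nonempty) ∨
    A ⊂ G.rel A α

/-- `A ∈ ℰ` is minimal: `A ≠ ∅` and `A ∩ C ∈ {A, ∅}` for every `C ∈ ℰ`. -/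
def MinimalSet (A : Set V) : Prop :=
  G.memE A ∧ A.Nonempty ∧ ∀ C : Set V, G.memE C → A ∩ C = A ∨ A ∩ C = ∅

/-- A set `Bset ⊆ E⁰` connects to a loop: there are a loop `(α, A)` and finitely many
paths `δ₁, …, δ_m ∈ ℒ*(E)`, none of which is an initial path of another, with
`A ⊆ ∪ᵢ r(Bset, δᵢ)`. -/
def ConnectsToLoop (Bset : Set V) : Prop :=
  ∃ (α : List Λ) (A : Set V), G.IsLoop α A ∧
    ∃ (m : ℕ) (δ : Fin m → List Λ), (∀ i, G.IsLabel (δ i)) ∧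
      (∀ i j, i ≠ j → ¬ (δ i <+: δ j)) ∧ A ⊆ ⋃ i, G.rel Bset (δ i)

/-- Every vertex connects to a loop: every generalized vertex `[v]_l` connects to a loop. -/
def EveryVertexConnectsToLoop : Prop :=
  ∀ (v : V) (l : ℕ), 1 ≤ l → (∃ e : G.Edge, G.rng e = v) →
    G.ConnectsToLoop (G.gv v l)

/-- The labeled space `(E, ℒ, ℰ)` is strongly cofinal. -/
def StronglyCofinal : Prop :=
  ∀ x : ℕ → Λ, (∀ n : ℕ, 1 ≤ n → G.IsLabel (wordPrefix x n)) →
    ∀ (v : V) (l : ℕ), (∃ e : G.Edge, G.rng e = v) → 1 ≤ l →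
      ∃ N : ℕ, 1 ≤ N ∧ ∃ (m : ℕ) (lam : Fin m → List Λ),
        (∀ i, G.IsLabel (lam i)) ∧
        G.range' (wordPrefix x N) ⊆ ⋃ i, G.rel (G.gv v l) (lam i)

/-- A subset `H ⊆ ℰ` is hereditary: it is closed under finite unions, relative ranges,
and subsets belonging to `ℰ`. -/
def IsHereditary (H : Set (Set V)) : Prop :=
  (∀ A ∈ H, G.memE A) ∧
  (∀ A ∈ H, ∀ C ∈ H, A ∪ C ∈ H) ∧
  (∀ A ∈ H, ∀ β : List Λ, G.IsLabel β → G.rel A β ∈ H) ∧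
  (∀ A ∈ H, ∀ C : Set V, G.memE C → C ⊆ A → C ∈ H)

/-- A subset `H ⊆ ℰ` is saturated: every `A ∈ ℰ` with `r(A, β) ∈ H` for all
`β ∈ ℒ*(E)` belongs to `H`. -/
def IsSaturated (H : Set (Set V)) : Prop :=
  ∀ A : Set V, G.memE A → (∀ β : List Λ, G.IsLabel β → G.rel A β ∈ H) → A ∈ H

end LabeledGraph

namespace LabeledGraph

variable {V : Type*} {Λ : Type*}

/-- A representation of the labeled space `(E, ℒ, ℰ)` in a C*-algebra `B`: a family of
projections `p A` (for `A ∈ ℰ`) and partial isometries `s a` (for letters `a`)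
satisfying the defining relations (i)–(iv). -/
structure Representation (G : LabeledGraph V Λ) (B : Type*)
    [NonUnitalCStarAlgebra B] where
  p : Set V → B
  s : Λ → B
  p_selfAdjoint : ∀ A : Set V, G.memE A → IsSelfAdjoint (p A)
  p_idem : ∀ A : Set V, G.memE A → p A * p A = p A
  p_empty : p ∅ = 0
  p_inter : ∀ A C : Set V, G.memE A → G.memE C → p (A ∩ C) = p A * p C
  p_union : ∀ A C : Set V, G.memE A → G.memE C →
    p (A ∪ C) = p A + p C - p (A ∩ C)
  p_mul_s : ∀ A : Set V, G.memE A → ∀ a : Λ, p A * s a = s a * p (G.rel A [a])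
  star_s_mul_s : ∀ a : Λ, star (s a) * s a = p (G.range' [a])
  star_s_mul_s_orth : ∀ a b : Λ, a ≠ b → star (s a) * s b = 0
  cuntz_krieger : ∀ A : Set V, G.memE A → ∀ F : Finset Λ,
    (F : Set Λ) = {a : Λ | [a] ∈ G.lblFrom A 1} →
    p A = ∑ a ∈ F, s a * p (G.rel A [a]) * star (s a)

/-- `s_α = s_{a₁} ⋯ s_{aₙ}` for a word `α = a₁ ⋯ aₙ` (defined as `0` on the empty word). -/
def Representation.sWord {G : LabeledGraph V Λ} {B : Type*} [NonUnitalCStarAlgebra B]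
    (ρ : Representation G B) : List Λ → B
  | [] => 0
  | [a] => ρ.s a
  | a :: b :: α => ρ.s a * Representation.sWord ρ (b :: α)

/-- A gauge action for a representation: a point-norm continuous action of the circle
group `𝕋` by *-automorphisms fixing the projections `p A` and multiplying each `s a`
by the corresponding scalar. -/
structure Representation.GaugeAction {G : LabeledGraph V Λ} {B : Type*} [NonUnitalCStarAlgebra B]
    (ρ : Representation G B) where
  γ : Circle → B ≃⋆ₐ[ℂ] B
  γ_mul : ∀ z w : Circle, γ (z * w) = (γ w).trans (γ z)
  γ_continuous : ∀ b : B, Continuous fun z : Circle => γ z b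
  γ_s : ∀ (z : Circle) (a : Λ), γ z (ρ.s a) = (z : ℂ) • ρ.s a
  γ_p : ∀ (z : Circle) (A : Set V), G.memE A → γ z (ρ.p A) = ρ.p A

end LabeledGraph

/-- A projection in a C*-algebra. -/
def IsProjectionElem {B : Type*} [NonUnitalCStarAlgebra B] (q : B) : Prop :=
  IsSelfAdjoint q ∧ q * q = q

/-- Murray–von Neumann equivalence of projections: `q = w* w` and `r = w w*` for some `w`. -/
def MvNEquiv {B : Type*} [NonUnitalCStarAlgebra B] (q r : B) : Prop :=
  ∃ w : B, star w * w = q ∧ w * star w = r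

/-- An infinite projection: a projection `q` such that `w* w = q`, `w w* ≤ q` and
`w w* ≠ q` for some `w`. -/
def IsInfiniteProjection {B : Type*} [NonUnitalCStarAlgebra B] [PartialOrder B]
    [StarOrderedRing B] (q : B) : Prop :=
  IsProjectionElem q ∧ ∃ w : B, star w * w = q ∧ w * star w ≤ q ∧ w * star w ≠ q

/-!
A loop `(α, A)` gives the partial isometry `w = s_α p_A`, with `w* w = p_A` because
`A ⊆ r(α)`, and `w w* = s_α p_A s_α* ≤ p_A` because `A ⊆ r(A, α)`. If `s_α p_A s_α* = p_A`,
conjugating by `s_β*` kills `p_{r(A,β)}` for every other label `β` of length `|α|`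
(as `s_β* s_α = 0`), and conjugating by `s_α*` gives `p_{r(A,α)} = p_A`, which forces
`r(A, α) = A` since no nonempty set of `ℰ` has zero projection. Either way the loop has no exit.
-/

namespace LabeledGraph

variable {V Λ : Type*} {G : LabeledGraph V Λ}

theorem PathLabel.ne_nil {u w : V} {σ : List Λ} (h : G.PathLabel u w σ) : σ ≠ [] := by
  cases h <;> simp

theorem pathLabel_cons_iff {u w : V} {a : Λ} {σ : List Λ} (hσ : σ ≠ []) :
    G.PathLabel u w (a :: σ) ↔ ∃ v, G.PathLabel u v [a] ∧ G.PathLabel v w σ := by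
  constructor
  · rintro (_ | ⟨e, h⟩)
    · exact absurd rfl hσ
    · exact ⟨_, .single e, h⟩
  · rintro ⟨v, ⟨e⟩ | ⟨e, h⟩, h'⟩
    · exact .cons e h'
    · exact absurd rfl h.ne_nil

theorem rel_mono {A C : Set V} (h : A ⊆ C) (σ : List Λ) : G.rel A σ ⊆ G.rel C σ :=
  fun _ ⟨u, hu, hp⟩ => ⟨u, h hu, hp⟩

theorem rel_subset_range' (A : Set V) (σ : List Λ) : G.rel A σ ⊆ G.range' σ :=
  rel_mono (Set.subset_univ A) σ

theorem rel_cons (A : Set V) (a : Λ) {σ : List Λ} (hσ : σ ≠ []) :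
    G.rel A (a :: σ) = G.rel (G.rel A [a]) σ := by
  ext w
  simp only [rel, pathLabel_cons_iff hσ]
  constructor
  · rintro ⟨u, hu, v, hv, hw⟩
    exact ⟨v, ⟨u, hu, hv⟩, hw⟩
  · rintro ⟨v, ⟨u, hu, hv⟩, hw⟩
    exact ⟨u, hu, v, hv, hw⟩

theorem range'_cons (a : Λ) {σ : List Λ} (hσ : σ ≠ []) :
    G.range' (a :: σ) = G.rel (G.range' [a]) σ :=
  rel_cons Set.univ a hσ

theorem IsLoop.subset_range' {α : List Λ} {A : Set V} (h : G.IsLoop α A) : A ⊆ G.range' α :=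
  h.2.2.2.trans (rel_subset_range' A α)

namespace Representation

variable {B : Type*} [NonUnitalCStarAlgebra B] (ρ : G.Representation B)

theorem isStarProjection_p {A : Set V} (hA : G.memE A) : IsStarProjection (ρ.p A) :=
  ⟨ρ.p_idem A hA, ρ.p_selfAdjoint A hA⟩

theorem p_mul_p_of_subset {A C : Set V} (hA : G.memE A) (hC : G.memE C) (h : A ⊆ C) :
    ρ.p A * ρ.p C = ρ.p A := by
  rw [← ρ.p_inter A C hA hC, Set.inter_eq_left.2 h]

theorem p_mul_p_of_superset {A C : Set V} (hA : G.memE A) (hC : G.memE C) (h : A ⊆ C) :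
    ρ.p C * ρ.p A = ρ.p A := by
  rw [← ρ.p_inter C A hC hA, Set.inter_eq_right.2 h]

theorem eq_of_subset_of_p_eq (hnz : ∀ C : Set V, G.memE C → C.Nonempty → ρ.p C ≠ 0)
    {A C : Set V} (hA : G.memE A) (hC : G.memE C) (hAC : A ⊆ C) (hp : ρ.p A = ρ.p C) :
    A = C := by
  have hD : G.memE (C \ A) := .diff hC hA
  have hpD : ρ.p (C \ A) = 0 := by
    rw [← ρ.p_mul_p_of_subset hD hC Set.sdiff_subset, ← hp, ← ρ.p_inter _ _ hD hA,
      Set.sdiff_inter_self, ρ.p_empty]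
  refine hAC.antisymm (Set.sdiff_eq_empty.1 ?_)
  exact Set.not_nonempty_iff_eq_empty.1 fun hne => hnz _ hD hne hpD

theorem sWord_cons (a : Λ) {σ : List Λ} (hσ : σ ≠ []) :
    ρ.sWord (a :: σ) = ρ.s a * ρ.sWord σ := by
  cases σ with
  | nil => exact absurd rfl hσ
  | cons => rfl

theorem p_mul_sWord {A : Set V} (hA : G.memE A) (σ : List Λ) :
    ρ.p A * ρ.sWord σ = ρ.sWord σ * ρ.p (G.rel A σ) := by
  induction σ generalizing A with
  | nil => simp [sWord]
  | cons a τ ih =>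
    rcases eq_or_ne τ [] with rfl | hτ
    · exact ρ.p_mul_s A hA a
    · rw [sWord_cons ρ a hτ, ← mul_assoc, ρ.p_mul_s A hA a, mul_assoc,
        ih (.relRange [a] (List.cons_ne_nil a []) hA), ← mul_assoc, rel_cons A a hτ]

theorem star_sWord_mul_sWord {σ : List Λ} (hσ : σ ≠ []) :
    star (ρ.sWord σ) * ρ.sWord σ = ρ.p (G.range' σ) := by
  induction σ with
  | nil => exact absurd rfl hσ
  | cons a τ ih =>
    rcases eq_or_ne τ [] with rfl | hτ
    · exact ρ.star_s_mul_s a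
    · have hra : G.memE (G.range' [a]) := .range [a] (List.cons_ne_nil a [])
      calc star (ρ.sWord (a :: τ)) * ρ.sWord (a :: τ)
          = star (ρ.sWord τ) * (star (ρ.s a) * ρ.s a * ρ.sWord τ) := by
            rw [sWord_cons ρ a hτ, star_mul]; noncomm_ring
        _ = ρ.p (G.range' τ) * ρ.p (G.rel (G.range' [a]) τ) := by
            rw [ρ.star_s_mul_s a, ρ.p_mul_sWord hra, ← mul_assoc, ih hτ]
        _ = ρ.p (G.range' (a :: τ)) := by
            rw [ρ.p_mul_p_of_superset (.relRange τ hτ hra) (.range τ hτ)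
              (rel_subset_range' _ τ), range'_cons a hτ]

theorem star_sWord_mul_p_mul_sWord {C : Set V} (hC : G.memE C) {σ : List Λ} (hσ : σ ≠ []) :
    star (ρ.sWord σ) * ρ.p C * ρ.sWord σ = ρ.p (G.rel C σ) := by
  rw [mul_assoc, ρ.p_mul_sWord hC, ← mul_assoc, ρ.star_sWord_mul_sWord hσ,
    ρ.p_mul_p_of_superset (.relRange σ hσ hC) (.range σ hσ) (rel_subset_range' C σ)]

theorem star_sWord_mul_sWord_of_ne {β : List Λ} :
    ∀ {γ : List Λ}, β.length = γ.length → β ≠ γ → star (ρ.sWord β) * ρ.sWord γ = 0 := by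
  induction β with
  | nil => exact fun hlen hne => absurd (List.length_eq_zero_iff.1 hlen.symm).symm hne
  | cons a β ih =>
    rintro (_ | ⟨b, γ⟩) hlen hne
    · simp at hlen
    have hlen' : β.length = γ.length := by simpa using hlen
    rcases eq_or_ne β [] with rfl | hβ
    · obtain rfl : γ = [] := List.length_eq_zero_iff.1 hlen'.symm
      exact ρ.star_s_mul_s_orth a b (by simpa using hne)
    have hγ : γ ≠ [] := fun h =>
      hβ (List.length_eq_zero_iff.1 (by rw [hlen', h, List.length_nil]))
    rw [sWord_cons ρ a hβ, sWord_cons ρ b hγ, star_mul,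
      show ∀ x y z t : B, x * y * (z * t) = x * (y * z) * t by intros; noncomm_ring]
    by_cases hab : a = b
    · subst hab
      have hra : G.memE (G.range' [a]) := .range [a] (List.cons_ne_nil a [])
      rw [ρ.star_s_mul_s, mul_assoc, ρ.p_mul_sWord hra, ← mul_assoc,
        ih hlen' fun h => hne (h ▸ rfl), zero_mul]
    · rw [ρ.star_s_mul_s_orth a b hab, mul_zero, zero_mul]

theorem mul_p_mul_star_mul_p (x : B) {C : Set V} (hC : G.memE C) :
    x * ρ.p C * star (x * ρ.p C) = x * ρ.p C * star x := by
  rw [star_mul, (ρ.p_selfAdjoint C hC).star_eq, ← mul_assoc, mul_assoc x, ρ.p_idem C hC]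

variable {α : List Λ} {A : Set V}

theorem star_sWord_mul_p_mul_sWord_mul_p (hα : α ≠ []) (hA : G.memE A)
    (hAr : A ⊆ G.range' α) :
    star (ρ.sWord α * ρ.p A) * (ρ.sWord α * ρ.p A) = ρ.p A := by
  rw [star_mul, (ρ.p_selfAdjoint A hA).star_eq, mul_assoc, ← mul_assoc (star _),
    ρ.star_sWord_mul_sWord hα, ← mul_assoc, ρ.p_mul_p_of_subset hA (.range α hα) hAr,
    ρ.p_idem A hA]

theorem isStarProjection_sWord_mul_p_mul_star (hα : α ≠ []) (hA : G.memE A)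
    (hAr : A ⊆ G.range' α) :
    IsStarProjection (ρ.sWord α * ρ.p A * star (ρ.sWord α)) := by
  refine ⟨?_, (ρ.p_selfAdjoint A hA).conjugate _⟩
  calc ρ.sWord α * ρ.p A * star (ρ.sWord α) * (ρ.sWord α * ρ.p A * star (ρ.sWord α))
      = ρ.sWord α * (ρ.p A * (star (ρ.sWord α) * ρ.sWord α) * ρ.p A) * star (ρ.sWord α) := by
        noncomm_ring
    _ = ρ.sWord α * ρ.p A * star (ρ.sWord α) := by
        rw [ρ.star_sWord_mul_sWord hα, ρ.p_mul_p_of_subset hA (.range α hα) hAr,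
          ρ.p_idem A hA]

theorem sWord_mul_p_mul_star_le [PartialOrder B] [StarOrderedRing B] (hloop : G.IsLoop α A) :
    ρ.sWord α * ρ.p A * star (ρ.sWord α) ≤ ρ.p A := by
  have ⟨hα, hA, _, hAα⟩ := hloop
  refine (ρ.isStarProjection_sWord_mul_p_mul_star hα hA hloop.subset_range').le_of_mul_eq_right
    (ρ.isStarProjection_p hA) ?_
  rw [← mul_assoc, ← mul_assoc, ρ.p_mul_sWord hA, mul_assoc (ρ.sWord α),
    ρ.p_mul_p_of_superset hA (.relRange α hα hA) hAα]

theorem not_hasExit_of_sWord_mul_p_mul_star_eq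
    (hnz : ∀ C : Set V, G.memE C → C.Nonempty → ρ.p C ≠ 0) (hloop : G.IsLoop α A)
    (h : ρ.sWord α * ρ.p A * star (ρ.sWord α) = ρ.p A) : ¬ G.HasExit α A := by
  have ⟨hα, hA, _, hAα⟩ := hloop
  rintro (⟨β, ⟨hlen, -⟩, hβα, hne⟩ | hss)
  · have hβ : β ≠ [] := let ⟨_, _, _, hp⟩ := hne; hp.ne_nil
    refine hnz _ (.relRange β hβ hA) hne ?_
    rw [← ρ.star_sWord_mul_p_mul_sWord hA hβ, ← h]
    calc star (ρ.sWord β) * (ρ.sWord α * ρ.p A * star (ρ.sWord α)) * ρ.sWord β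
        = star (ρ.sWord β) * ρ.sWord α * (ρ.p A * star (ρ.sWord α) * ρ.sWord β) := by
          noncomm_ring
      _ = 0 := by rw [ρ.star_sWord_mul_sWord_of_ne hlen hβα, zero_mul]
  · refine hss.ne (ρ.eq_of_subset_of_p_eq hnz hA (.relRange α hα hA) hAα ?_)
    rw [← ρ.star_sWord_mul_p_mul_sWord hA hα]
    conv_rhs => rw [← h]
    calc ρ.p A = ρ.p (G.range' α) * ρ.p A * ρ.p (G.range' α) := by
          rw [ρ.p_mul_p_of_superset hA (.range α hα) hloop.subset_range',
            ρ.p_mul_p_of_subset hA (.range α hα) hloop.subset_range']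
      _ = star (ρ.sWord α) * (ρ.sWord α * ρ.p A * star (ρ.sWord α)) * ρ.sWord α := by
          rw [← ρ.star_sWord_mul_sWord hα]; noncomm_ring

end Representation

end LabeledGraph

theorem stmt_6_general {V : Type*} {Λ : Type*}
    (G : LabeledGraph V Λ)
    {B : Type*} [NonUnitalCStarAlgebra B] [PartialOrder B] [StarOrderedRing B]
    (ρ : G.Representation B)
    (hnz : ∀ C : Set V, G.memE C → C.Nonempty → ρ.p C ≠ 0)
    (α : List Λ) (A : Set V) (hloop : G.IsLoop α A) (hexit : G.HasExit α A) :
    IsInfiniteProjection (ρ.p A) := by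
  have ⟨hα, hA, _, _⟩ := hloop
  refine ⟨⟨ρ.p_selfAdjoint A hA, ρ.p_idem A hA⟩, ρ.sWord α * ρ.p A,
    ρ.star_sWord_mul_p_mul_sWord_mul_p hα hA hloop.subset_range', ?_, ?_⟩ <;>
    rw [ρ.mul_p_mul_star_mul_p _ hA]
  · exact ρ.sWord_mul_p_mul_star_le hloop
  · exact fun h => ρ.not_hasExit_of_sWord_mul_p_mul_star_eq hnz hloop h hexit

/-- If `{s_a, p_A}` is a representation of `(E, ℒ, ℰ)` in a C*-algebra with `p_B ≠ 0`
for every nonempty `B ∈ ℰ`, and `(α, A)` is a loop with an exit, then `p_A` is an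
infinite projection. -/
theorem stmt_6 {V : Type*} {Λ : Type*} [Countable V] [Countable Λ]
    (G : LabeledGraph V Λ) [Countable G.Edge] (hS : G.Standing)
    {B : Type*} [NonUnitalCStarAlgebra B] [PartialOrder B] [StarOrderedRing B]
    (ρ : G.Representation B)
    (hnz : ∀ C : Set V, G.memE C → C.Nonempty → ρ.p C ≠ 0)
    (α : List Λ) (A : Set V) (hloop : G.IsLoop α A) (hexit : G.HasExit α A) :
    IsInfiniteProjection (ρ.p A) :=
  stmt_6_general G ρ hnz α A hloop hexit
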